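/- Let ε > 0 be such that 1/ε ≥ 3 is an integer. For every OOEBP instance I with n ≥ 1 items of sizes in (0,1], if there exists a feasible packing of I using m bins in which every exceeding item has size at least ε², then there exists a nice feasible packing of I using at most (1+ε)·m + 1/ε bins. -/

import Mathlib

/-!
Let `M` be the number of exceeding items and `g = ⌊M/k⌋ + 1`. Move every exceeding item into the
bin of the exceeding item `g` ranks before it, and give each of the first `g` exceeding items a
fresh bin. A bin keeps its non-exceeding items, which all precede its old exceeding item, so the
load in front of every item can only shrink and every new exceeding item was an old one; the cost
grows by `g ≤ εm + 1`. Cutting the sequence after every `g`-th exceeding item gives the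
certificate: the exceeding item of rank `r` shares its bin only with items preceding the exceeding
item of rank `r - g`, so the cut after `g⌊r/g⌋` exceeding items separates it from them.
-/

open scoped BigOperators Classical

namespace OOEBP

noncomputable section

/-- Load of bin `b` under packing `p` of instance `s`. -/
def binLoad (s : List ℝ) (p : ℕ → ℕ) (b : ℕ) : ℝ :=
  ∑ j ∈ Finset.range s.length, if p j = b then s.getD j 0 else 0

/-- A packing is feasible if each item is placed into a bin whose current
load (total size of earlier items in the same bin) is strictly below 1. -/
def Feasible (s : List ℝ) (p : ℕ → ℕ) : Prop :=
  ∀ i < s.length,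
    (∑ j ∈ Finset.range i, if p j = p i then s.getD j 0 else 0) < 1

/-- The cost of a packing: the number of nonempty bins. -/
def cost (s : List ℝ) (p : ℕ → ℕ) : ℕ :=
  ((Finset.range s.length).image p).card

/-- Optimal cost of a feasible packing of `s`. -/
def OPT (s : List ℝ) : ℕ :=
  sInf {m | ∃ p, Feasible s p ∧ cost s p = m}

/-- Item `i` is the exceeding item of its bin: the bin's total size is at
least 1 and `i` is the item of maximum index in its bin. -/
def IsExceeding (s : List ℝ) (p : ℕ → ℕ) (i : ℕ) : Prop :=
  i < s.length ∧ 1 ≤ binLoad s p (p i) ∧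
    ∀ j, i < j → j < s.length → p j ≠ p i

theorem _root_.Nat.nth_mem_of_lt_count {P : ℕ → Prop} [DecidablePred P] {c n : ℕ}
    (h : c < Nat.count P n) : P (Nat.nth P c) :=
  Nat.nth_mem c fun hf => h.trans_le (Nat.count_le_card hf n)

theorem _root_.Nat.count_nth_of_lt_count {P : ℕ → Prop} [DecidablePred P] {c n : ℕ}
    (h : c < Nat.count P n) : Nat.count P (Nat.nth P c) = c :=
  Nat.count_nth fun hf => h.trans_le (Nat.count_le_card hf n)

section Load

variable {s : List ℝ} {p q : ℕ → ℕ} {i j w : ℕ}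

def load (s : List ℝ) (T : Finset ℕ) : ℝ :=
  ∑ j ∈ T, s.getD j 0

def binItems (s : List ℝ) (p : ℕ → ℕ) (b : ℕ) : Finset ℕ :=
  {j ∈ Finset.range s.length | p j = b}

def earlier (p : ℕ → ℕ) (i : ℕ) : Finset ℕ :=
  {j ∈ Finset.range i | p j = p i}

theorem feasible_iff : Feasible s p ↔ ∀ i < s.length, load s (earlier p i) < 1 := by
  simp only [Feasible, load, earlier, Finset.sum_filter]

theorem binLoad_eq_load (b : ℕ) : binLoad s p b = load s (binItems s p b) := by
  simp only [binLoad, load, binItems, Finset.sum_filter]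

theorem load_mono (hs : ∀ x ∈ s, 0 ≤ x) {T U : Finset ℕ} (h : T ⊆ U) :
    load s T ≤ load s U := by
  refine Finset.sum_le_sum_of_subset_of_nonneg h fun j _ _ => ?_
  rcases lt_or_ge j s.length with hj | hj
  · rw [List.getD_eq_getElem _ _ hj]
    exact hs _ (List.getElem_mem hj)
  · rw [List.getD_eq_default _ _ hj]

theorem insert_earlier_subset_binItems (hi : i < s.length) :
    insert i (earlier p i) ⊆ binItems s p (p i) := by
  intro j hj
  simp only [Finset.mem_insert, earlier, binItems, Finset.mem_filter, Finset.mem_range] at hj ⊢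
  rcases hj with rfl | ⟨hji, hj⟩
  · exact ⟨hi, rfl⟩
  · exact ⟨hji.trans hi, hj⟩

theorem insert_earlier_subset_earlier (hiw : i < w) (h : p i = p w) :
    insert i (earlier p i) ⊆ earlier p w := by
  intro j hj
  simp only [Finset.mem_insert, earlier, Finset.mem_filter, Finset.mem_range] at hj ⊢
  rcases hj with rfl | ⟨hji, hj⟩
  · exact ⟨hiw, h⟩
  · exact ⟨hji.trans hiw, hj.trans h⟩

theorem IsExceeding.lt_of_apply_eq (hi : IsExceeding s p i) (hj : j < s.length)
    (hji : p j = p i) (hne : j ≠ i) : j < i := by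
  by_contra! h
  exact hi.2.2 j (lt_of_le_of_ne h hne.symm) hj hji

theorem IsExceeding.eq_of_apply_eq (hi : IsExceeding s p i) (hj : IsExceeding s p j)
    (h : p j = p i) : j = i := by
  by_contra hne
  exact (hi.lt_of_apply_eq hj.1 h hne).not_ge (hj.lt_of_apply_eq hi.1 h.symm (Ne.symm hne)).le

theorem IsExceeding.binItems_subset (hi : IsExceeding s p i) :
    binItems s p (p i) ⊆ insert i (earlier p i) := by
  intro j hj
  simp only [binItems, Finset.mem_filter, Finset.mem_range] at hj
  rcases eq_or_ne j i with rfl | hne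
  · exact Finset.mem_insert_self _ _
  · exact Finset.mem_insert_of_mem
      (Finset.mem_filter.2 ⟨Finset.mem_range.2 (hi.lt_of_apply_eq hj.1 hj.2 hne), hj.2⟩)

theorem exists_isExceeding_of_one_le_binLoad (hi : i < s.length)
    (h : 1 ≤ binLoad s p (p i)) : ∃ w, IsExceeding s p w ∧ p w = p i := by
  have hne : (binItems s p (p i)).Nonempty := ⟨i, Finset.mem_filter.2 ⟨Finset.mem_range.2 hi, rfl⟩⟩
  obtain ⟨hw, hpw⟩ := Finset.mem_filter.1 (Finset.max'_mem _ hne)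
  refine ⟨_, ⟨Finset.mem_range.1 hw, by rwa [hpw], fun j hwj hj hpj => ?_⟩, hpw⟩
  have hmem : j ∈ binItems s p (p i) := Finset.mem_filter.2 ⟨Finset.mem_range.2 hj, hpj.trans hpw⟩
  exact hwj.not_ge (Finset.le_max' _ j hmem)

theorem Feasible.of_earlier_subset (hs : ∀ x ∈ s, 0 ≤ x) (hp : Feasible s p)
    (h : ∀ i < s.length, ∃ w < s.length, earlier q i ⊆ earlier p w) : Feasible s q := by
  rw [feasible_iff] at hp ⊢
  intro i hi
  obtain ⟨w, hw, hsub⟩ := h i hi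
  exact (load_mono hs hsub).trans_lt (hp w hw)

theorem IsExceeding.of_earlier_subset (hs : ∀ x ∈ s, 0 ≤ x) (hp : Feasible s p)
    (hsub : earlier q i ⊆ earlier p i) (hq : IsExceeding s q i) : IsExceeding s p i := by
  have hload : 1 ≤ load s (insert i (earlier p i)) := by
    calc 1 ≤ binLoad s q (q i) := hq.2.1
      _ = load s (binItems s q (q i)) := binLoad_eq_load _
      _ ≤ load s (insert i (earlier p i)) :=
        load_mono hs (hq.binItems_subset.trans (Finset.insert_subset_insert i hsub))
  obtain ⟨w, hw, hpw⟩ := exists_isExceeding_of_one_le_binLoad hq.1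
    (hload.trans ((load_mono hs (insert_earlier_subset_binItems hq.1)).trans_eq
      (binLoad_eq_load _).symm))
  rcases eq_or_ne i w with rfl | hne
  · exact hw
  · have hiw := hw.lt_of_apply_eq hq.1 hpw.symm hne
    have := (load_mono hs (insert_earlier_subset_earlier hiw hpw.symm)).trans_lt
      ((feasible_iff.1 hp) w hw.1)
    linarith

end Load

section Threshold

variable {s : List ℝ} {p : ℕ → ℕ} {g t i : ℕ}

def threshold (s : List ℝ) (p : ℕ → ℕ) (g t : ℕ) : ℕ :=
  Nat.find (⟨s.length, Or.inr le_rfl⟩ :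
    ∃ x, t * g ≤ Nat.count (IsExceeding s p) x ∨ s.length ≤ x)

theorem threshold_zero : threshold s p g 0 = 0 :=
  Nat.find_eq_zero _ |>.2 (Or.inl (by rw [zero_mul]; exact Nat.zero_le _))

theorem threshold_pos (hg : 0 < g) (hn : 0 < s.length) (ht : 0 < t) : 0 < threshold s p g t := by
  refine Nat.find_pos _ |>.2 ?_
  rw [Nat.count_zero]
  have := Nat.mul_pos ht hg
  omega

theorem threshold_mono {t t' : ℕ} (h : t ≤ t') : threshold s p g t ≤ threshold s p g t' :=
  Nat.find_mono fun _ hx => hx.imp_left ((Nat.mul_le_mul_right g h).trans)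

theorem threshold_le_of_le_count (h : t * g ≤ Nat.count (IsExceeding s p) i) :
    threshold s p g t ≤ i :=
  Nat.find_min' _ (Or.inl h)

theorem lt_threshold (hi : i < s.length) (h : Nat.count (IsExceeding s p) i < t * g) :
    i < threshold s p g t := by
  rcases Nat.find_spec (⟨s.length, Or.inr le_rfl⟩ :
      ∃ x, t * g ≤ Nat.count (IsExceeding s p) x ∨ s.length ≤ x) with hx | hx
  · exact Nat.lt_of_count_lt_count (h.trans_le hx)
  · exact hi.trans_le hx

theorem threshold_eq_length (h : Nat.count (IsExceeding s p) s.length < t * g) :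
    threshold s p g t = s.length := by
  refine le_antisymm (Nat.find_min' _ (Or.inr le_rfl)) (Nat.le_of_not_lt fun hlt => ?_)
  exact (lt_threshold hlt ((Nat.count_monotone _ hlt.le).trans_lt h)).false

end Threshold

section Regroup

variable {s : List ℝ} {p : ℕ → ℕ} {g N i j : ℕ}

def partner (s : List ℝ) (p : ℕ → ℕ) (g j : ℕ) : ℕ :=
  Nat.nth (IsExceeding s p) (Nat.count (IsExceeding s p) j - g)

def regroup (s : List ℝ) (p : ℕ → ℕ) (g N j : ℕ) : ℕ :=
  if IsExceeding s p j then
    if g ≤ Nat.count (IsExceeding s p) j then p (partner s p g j)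
    else N + Nat.count (IsExceeding s p) j
  else p j

theorem regroup_of_not_isExceeding (hj : ¬IsExceeding s p j) : regroup s p g N j = p j := by
  simp [regroup, hj]

theorem regroup_of_le_count (hj : IsExceeding s p j) (hg : g ≤ Nat.count (IsExceeding s p) j) :
    regroup s p g N j = p (partner s p g j) := by
  simp [regroup, hj, hg]

theorem regroup_of_count_lt (hj : IsExceeding s p j) (hg : Nat.count (IsExceeding s p) j < g) :
    regroup s p g N j = N + Nat.count (IsExceeding s p) j := by
  simp [regroup, hj, hg.not_ge]

theorem count_sub_lt_count_succ (hj : IsExceeding s p j) :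
    Nat.count (IsExceeding s p) j - g < Nat.count (IsExceeding s p) (j + 1) :=
  (Nat.sub_le _ _).trans_lt (Nat.count_lt_count_succ_iff.2 hj)

theorem IsExceeding.partner (hj : IsExceeding s p j) : IsExceeding s p (partner s p g j) :=
  Nat.nth_mem_of_lt_count (count_sub_lt_count_succ hj)

theorem count_partner (hj : IsExceeding s p j) :
    Nat.count (IsExceeding s p) (partner s p g j) = Nat.count (IsExceeding s p) j - g :=
  Nat.count_nth_of_lt_count (count_sub_lt_count_succ hj)

theorem partner_le (hj : IsExceeding s p j) : partner s p g j ≤ j :=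
  Nat.lt_succ_iff.1 (Nat.nth_lt_of_lt_count (count_sub_lt_count_succ hj))

theorem partner_lt_length (hj : IsExceeding s p j) : partner s p g j < s.length :=
  (partner_le hj).trans_lt hj.1

theorem eq_of_apply_partner_eq (hi : IsExceeding s p i) (hj : IsExceeding s p j)
    (hgi : g ≤ Nat.count (IsExceeding s p) i) (hgj : g ≤ Nat.count (IsExceeding s p) j)
    (h : p (partner s p g j) = p (partner s p g i)) : j = i := by
  have hcount := congrArg (Nat.count (IsExceeding s p)) (hi.partner.eq_of_apply_eq hj.partner h)
  rw [count_partner hi, count_partner hj] at hcount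
  exact Nat.count_injective hj hi (by omega)

variable (hN : ∀ j < s.length, p j < N)
include hN

theorem earlier_regroup_subset_of_not_isExceeding (hi : i < s.length) (hni : ¬IsExceeding s p i) :
    earlier (regroup s p g N) i ⊆ earlier p i := by
  intro j hj
  simp only [earlier, Finset.mem_filter, Finset.mem_range, regroup_of_not_isExceeding hni] at hj ⊢
  obtain ⟨hji, hq⟩ := hj
  by_cases hj : IsExceeding s p j
  · exfalso
    by_cases hg : g ≤ Nat.count (IsExceeding s p) j
    · rw [regroup_of_le_count hj hg] at hq
      have hiw := hj.partner.lt_of_apply_eq hi hq.symm (fun h => hni (h ▸ hj.partner))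
      exact hiw.not_ge ((partner_le hj).trans hji.le)
    · rw [regroup_of_count_lt hj (not_le.1 hg)] at hq
      have := hN i hi
      omega
  · exact ⟨hji, (regroup_of_not_isExceeding hj).symm.trans hq⟩

theorem earlier_regroup_subset_of_le_count (hi : IsExceeding s p i)
    (hg : g ≤ Nat.count (IsExceeding s p) i) :
    earlier (regroup s p g N) i ⊆ earlier p (partner s p g i) := by
  intro j hj
  simp only [earlier, Finset.mem_filter, Finset.mem_range, regroup_of_le_count hi hg] at hj ⊢
  obtain ⟨hji, hq⟩ := hj
  by_cases hj : IsExceeding s p j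
  · exfalso
    by_cases hgj : g ≤ Nat.count (IsExceeding s p) j
    · rw [regroup_of_le_count hj hgj] at hq
      exact hji.ne (eq_of_apply_partner_eq hi hj hg hgj hq)
    · rw [regroup_of_count_lt hj (not_le.1 hgj)] at hq
      have := hN _ (partner_lt_length (g := g) hi)
      omega
  · rw [regroup_of_not_isExceeding hj] at hq
    exact ⟨hi.partner.lt_of_apply_eq (hji.trans hi.1) hq (fun h => hj (h ▸ hi.partner)), hq⟩

theorem earlier_regroup_eq_empty (hi : IsExceeding s p i)
    (hg : Nat.count (IsExceeding s p) i < g) : earlier (regroup s p g N) i = ∅ := by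
  refine Finset.eq_empty_of_forall_notMem fun j hj => ?_
  simp only [earlier, Finset.mem_filter, Finset.mem_range, regroup_of_count_lt hi hg] at hj
  obtain ⟨hji, hq⟩ := hj
  by_cases hj : IsExceeding s p j
  · by_cases hgj : g ≤ Nat.count (IsExceeding s p) j
    · rw [regroup_of_le_count hj hgj] at hq
      have := hN _ (partner_lt_length (g := g) hj)
      omega
    · rw [regroup_of_count_lt hj (not_le.1 hgj)] at hq
      exact hji.ne (Nat.count_injective hj hi (by omega))
  · rw [regroup_of_not_isExceeding hj] at hq
    have := hN j (hji.trans hi.1)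
    omega

theorem feasible_regroup (hs : ∀ x ∈ s, 0 ≤ x) (hp : Feasible s p) :
    Feasible s (regroup s p g N) := by
  refine hp.of_earlier_subset hs fun i hi => ?_
  by_cases hei : IsExceeding s p i
  · by_cases hg : g ≤ Nat.count (IsExceeding s p) i
    · exact ⟨_, partner_lt_length hei, earlier_regroup_subset_of_le_count hN hei hg⟩
    · refine ⟨i, hi, ?_⟩
      rw [earlier_regroup_eq_empty hN hei (not_le.1 hg)]
      exact Finset.empty_subset _
  · exact ⟨i, hi, earlier_regroup_subset_of_not_isExceeding hN hi hei⟩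

theorem IsExceeding.of_regroup (hs : ∀ x ∈ s, 0 ≤ x) (hp : Feasible s p)
    (hq : IsExceeding s (regroup s p g N) i) : IsExceeding s p i := by
  by_contra hni
  exact hni (hq.of_earlier_subset hs hp (earlier_regroup_subset_of_not_isExceeding hN hq.1 hni))

theorem regroup_certificate {k : ℕ} (hk : Nat.count (IsExceeding s p) s.length < k * g)
    (hi : IsExceeding s p i) (hq : IsExceeding s (regroup s p g N) i) :
    ∃ t ≤ k, threshold s p g t ≤ i ∧ ∀ j < s.length,
      regroup s p g N j = regroup s p g N i → j ≠ i → j < threshold s p g t := by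
  have hearlier : ∀ j < s.length, regroup s p g N j = regroup s p g N i → j ≠ i →
      j ∈ earlier (regroup s p g N) i := fun j hj hji hne =>
    Finset.mem_filter.2 ⟨Finset.mem_range.2 (hq.lt_of_apply_eq hj hji hne), hji⟩
  by_cases hg : g ≤ Nat.count (IsExceeding s p) i
  · have hg0 : 0 < g := Nat.pos_of_ne_zero (by rintro rfl; simp at hk)
    have hcount := Nat.count_strict_mono hi hi.1
    refine ⟨Nat.count (IsExceeding s p) i / g, (Nat.div_lt_of_lt_mul (by linarith)).le,
      threshold_le_of_le_count (Nat.div_mul_le_self _ _), fun j hj hji hne => ?_⟩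
    have hjw := earlier_regroup_subset_of_le_count hN hi hg (hearlier j hj hji hne)
    simp only [earlier, Finset.mem_filter, Finset.mem_range] at hjw
    refine hjw.1.trans (lt_threshold (partner_lt_length hi) ?_)
    have := Nat.lt_div_mul_add (a := Nat.count (IsExceeding s p) i) hg0
    rw [count_partner hi]
    omega
  · refine ⟨0, Nat.zero_le _, threshold_zero.trans_le (Nat.zero_le _), fun j hj hji hne => ?_⟩
    have := hearlier j hj hji hne
    rw [earlier_regroup_eq_empty hN hi (not_le.1 hg)] at this
    exact absurd this (Finset.notMem_empty j)

end Regroup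

theorem cost_regroup_le (s : List ℝ) (p : ℕ → ℕ) (g N : ℕ) :
    cost s (regroup s p g N) ≤ cost s p + g := by
  have hsub : (Finset.range s.length).image (regroup s p g N) ⊆
      (Finset.range s.length).image p ∪ (Finset.range g).image (N + ·) := by
    intro b hb
    obtain ⟨j, hj, rfl⟩ := Finset.mem_image.1 hb
    simp only [Finset.mem_union, Finset.mem_image, Finset.mem_range] at hj ⊢
    by_cases hej : IsExceeding s p j
    · by_cases hg : g ≤ Nat.count (IsExceeding s p) j
      · exact Or.inl ⟨_, partner_lt_length hej, (regroup_of_le_count hej hg).symm⟩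
      · exact Or.inr ⟨_, not_le.1 hg, (regroup_of_count_lt hej (not_le.1 hg)).symm⟩
    · exact Or.inl ⟨j, hj, (regroup_of_not_isExceeding hej).symm⟩
  calc cost s (regroup s p g N) ≤ _ := Finset.card_le_card hsub
    _ ≤ _ := Finset.card_union_le _ _
    _ ≤ cost s p + g := Nat.add_le_add_left (Finset.card_image_le.trans (Finset.card_range g).le) _

theorem count_isExceeding_le_cost (s : List ℝ) (p : ℕ → ℕ) :
    Nat.count (IsExceeding s p) s.length ≤ cost s p := by
  rw [Nat.count_eq_card_filter_range, ← Finset.card_image_of_injOn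
    fun i hi j hj h => (Finset.mem_filter.1 hj).2.eq_of_apply_eq (Finset.mem_filter.1 hi).2 h]
  exact Finset.card_le_card (Finset.image_subset_image (Finset.filter_subset _ _))

theorem stmt1 (ε : ℝ) (k : ℕ) (hk : 3 ≤ k) (hεk : ε = 1 / k)
    (s : List ℝ) (hn : 1 ≤ s.length) (hs : ∀ x ∈ s, 0 < x ∧ x ≤ 1)
    (p : ℕ → ℕ) (hp : Feasible s p)
    (hexc : ∀ i, IsExceeding s p i → ε ^ 2 ≤ s.getD i 0)
    (m : ℕ) (hm : cost s p = m) :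
    ∃ q : ℕ → ℕ, Feasible s q ∧
      (∀ i, IsExceeding s q i → ε ^ 2 ≤ s.getD i 0) ∧
      (∃ e : ℕ → ℕ, e 0 = 0 ∧ 0 < e 1 ∧
        (∀ a b, a ≤ b → b ≤ k → e a ≤ e b) ∧ e k = s.length ∧
        ∀ i, IsExceeding s q i →
          ∃ t ≤ k, e t ≤ i ∧ ∀ j < s.length, q j = q i → j ≠ i → j < e t) ∧
      (cost s q : ℝ) ≤ (1 + ε) * m + 1 / ε := by
  set M := Nat.count (IsExceeding s p) s.length
  set g := M / k + 1
  set N := (Finset.range s.length).sup p + 1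
  have hN : ∀ j < s.length, p j < N := fun j hj =>
    Nat.lt_succ_of_le (Finset.le_sup (Finset.mem_range.2 hj))
  have hs' : ∀ x ∈ s, 0 ≤ x := fun x hx => (hs x hx).1.le
  have hMk : M < k * g := Nat.lt_mul_div_succ M (by omega)
  have hMm : M ≤ m := hm ▸ count_isExceeding_le_cost s p
  have hcost : cost s (regroup s p g N) ≤ m + m / k + 1 := by
    have := Nat.div_le_div_right (c := k) hMm
    have := cost_regroup_le s p g N
    omega
  refine ⟨regroup s p g N, feasible_regroup hN hs' hp,
    fun i hi => hexc i (hi.of_regroup hN hs' hp),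
    ⟨threshold s p g, threshold_zero, threshold_pos (Nat.succ_pos _) hn Nat.one_pos,
      fun a b hab _ => threshold_mono hab, threshold_eq_length hMk,
      fun i hi => regroup_certificate hN hMk (hi.of_regroup hN hs' hp) hi⟩, ?_⟩
  have hk1 : (1 : ℝ) ≤ k := by exact_mod_cast (by omega : 1 ≤ k)
  calc (cost s (regroup s p g N) : ℝ) ≤ m + (m / k : ℕ) + 1 := by exact_mod_cast hcost
    _ ≤ m + m / k + k := by grw [Nat.cast_div_le, hk1]
    _ = (1 + ε) * m + 1 / ε := by rw [hεk, one_div_one_div]; ring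

end

end OOEBP
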